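/- Let σ ∈ {naive, stb, stage, pref, sem} and let F = (A,R) be an AF whose component-structure is K(F) = {K_1, …, K_n}. Then the map E ↦ (E ∩ K_1, …, E ∩ K_n) is a bijection from σ(F) onto the cartesian product σ(F|K_1) × … × σ(F|K_n), where F|K = (K, R ∩ (K × K)) is the restriction of F to K. -/

import Mathlib

structure AF where
  A : Finset ℕ
  R : Set (ℕ × ℕ)
  R_sub : ∀ p ∈ R, p.1 ∈ A ∧ p.2 ∈ A

namespace AF

def cf (F : AF) : Set (Set ℕ) :=
  {S | S ⊆ ↑F.A ∧ ∀ a ∈ S, ∀ b ∈ S, (a, b) ∉ F.R}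

def defends (F : AF) (S : Set ℕ) (a : ℕ) : Prop :=
  ∀ b, (b, a) ∈ F.R → ∃ s ∈ S, (s, b) ∈ F.R

def adm (F : AF) : Set (Set ℕ) :=
  {S | S ∈ F.cf ∧ ∀ a ∈ S, F.defends S a}

def rng (F : AF) (S : Set ℕ) : Set ℕ :=
  S ∪ {b | ∃ s ∈ S, (s, b) ∈ F.R}

def naive (F : AF) : Set (Set ℕ) :=
  {S | S ∈ F.cf ∧ ∀ T ∈ F.cf, S ⊆ T → S = T}

def stb (F : AF) : Set (Set ℕ) :=
  {S | S ∈ F.cf ∧ ∀ a ∈ F.A, a ∉ S → ∃ s ∈ S, (s, a) ∈ F.R}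

def pref (F : AF) : Set (Set ℕ) :=
  {S | S ∈ F.adm ∧ ∀ T ∈ F.adm, S ⊆ T → S = T}

def stage (F : AF) : Set (Set ℕ) :=
  {S | S ∈ F.cf ∧ ¬ ∃ T ∈ F.cf, F.rng S ⊂ F.rng T}

def sem (F : AF) : Set (Set ℕ) :=
  {S | S ∈ F.adm ∧ ¬ ∃ T ∈ F.adm, F.rng S ⊂ F.rng T}

end AF

abbrev Semantics := AF → Set (Set ℕ)

def StandardSemantics : Set Semantics :=
  {AF.naive, AF.stb, AF.stage, AF.pref, AF.sem}

def AFCompact (σ : Semantics) (F : AF) : Prop :=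
  ∀ a ∈ F.A, ∃ S ∈ σ F, a ∈ S

def CAF (σ : Semantics) : Set AF := {F | AFCompact σ F}

def ArgS (𝕊 : Set (Set ℕ)) : Set ℕ := ⋃₀ 𝕊

def PairsS (𝕊 : Set (Set ℕ)) : Set (ℕ × ℕ) :=
  {p | ∃ S ∈ 𝕊, p.1 ∈ S ∧ p.2 ∈ S}

def IsExtensionSet (𝕊 : Set (Set ℕ)) : Prop := (ArgS 𝕊).Finite

def AFStep (F : AF) (a b : ℕ) : Prop := (a, b) ∈ F.R ∨ (b, a) ∈ F.R

def AFConnected (F : AF) : Prop :=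
  ∀ a ∈ F.A, ∀ b ∈ F.A, Relation.ReflTransGen (AFStep F) a b

def sameComp (F : AF) (a b : ℕ) : Prop := Relation.ReflTransGen (AFStep F) a b

def comps (F : AF) : Set (Set ℕ) :=
  {K | ∃ a ∈ F.A, K = {b ∈ (↑F.A : Set ℕ) | sameComp F a b}}

def nopairs (𝕊 : Set (Set ℕ)) (a b : ℕ) : Prop :=
  a ∈ ArgS 𝕊 ∧ b ∈ ArgS 𝕊 ∧ (a, b) ∉ PairsS 𝕊

def compsS (𝕊 : Set (Set ℕ)) : Set (Set ℕ) :=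
  {K | ∃ a ∈ ArgS 𝕊, K = {b ∈ ArgS 𝕊 | Relation.ReflTransGen (nopairs 𝕊) a b}}

noncomputable def sigmaMax (σ : Semantics) (n : ℕ) : ℕ :=
  sSup {k | ∃ F : AF, F.A.card = n ∧ (σ F).ncard = k}

noncomputable def sigmaMaxCon (σ : Semantics) (n : ℕ) : ℕ :=
  sSup {k | ∃ F : AF, F.A.card = n ∧ AFConnected F ∧ (σ F).ncard = k}

noncomputable def sigmaMax2 (σ : Semantics) (n : ℕ) : ℕ :=
  sSup ({k | ∃ F : AF, F.A.card = n ∧ (σ F).ncard = k} \ {sigmaMax σ n})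

def cfSet (𝕊 : Set (Set ℕ)) : Set (Set ℕ) :=
  {S | S ⊆ ArgS 𝕊 ∧ ∀ a ∈ S, ∀ b ∈ S, (a, b) ∈ PairsS 𝕊}

def plusSet (𝕊 : Set (Set ℕ)) : Set (Set ℕ) :=
  {S | S ∈ cfSet 𝕊 ∧ ∀ T ∈ cfSet 𝕊, S ⊆ T → S = T}

def minusSet (𝕊 : Set (Set ℕ)) : Set (Set ℕ) := plusSet 𝕊 \ 𝕊

def Sig (σ : Semantics) : Set (Set (Set ℕ)) := {𝕊 | ∃ F : AF, σ F = 𝕊}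

def cSig (σ : Semantics) : Set (Set (Set ℕ)) :=
  {𝕊 | ∃ F : AF, AFCompact σ F ∧ σ F = 𝕊}

def Pcon (σ : Semantics) (n : ℕ) : Set ℕ :=
  {k | ∃ F : AF, AFCompact σ F ∧ AFConnected F ∧ F.A.card = n ∧ (σ F).ncard = k}

open Classical in
noncomputable def restrictAF (F : AF) (K : Set ℕ) : AF where
  A := F.A.filter (fun a => a ∈ K)
  R := {p | p ∈ F.R ∧ p.1 ∈ K ∧ p.2 ∈ K}
  R_sub := fun p hp => by
    have h := F.R_sub p hp.1
    simp only [Finset.mem_filter]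
    exact ⟨⟨h.1, hp.2.1⟩, ⟨h.2, hp.2.2⟩⟩

def IsExclusionMapping (𝕊 : Set (Set ℕ)) (Rm : Set (ℕ × ℕ)) : Prop :=
  ∃ f : Set ℕ → ℕ,
    (∀ S ∈ minusSet 𝕊, f S ∈ ArgS 𝕊 ∧ f S ∉ S) ∧
    Rm = {p | ∃ S ∈ minusSet 𝕊, p.1 ∈ S ∧ p.2 = f S ∧ p ∉ PairsS 𝕊}

def Independent (𝕊 : Set (Set ℕ)) : Prop :=
  ∃ Rm : Set (ℕ × ℕ), IsExclusionMapping 𝕊 Rm ∧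
    (∀ a b, (a, b) ∈ Rm → (b, a) ∈ Rm → a = b) ∧
    ∀ S ∈ 𝕊, ∀ a ∈ ArgS 𝕊 \ S, ∃ s ∈ S, (s, a) ∉ Rm ∪ PairsS 𝕊

def ConflictExplicit (σ : Semantics) (F : AF) : Prop :=
  ∀ a ∈ F.A, ∀ b ∈ F.A, (a, b) ∉ PairsS (σ F) → (a, b) ∈ F.R ∨ (b, a) ∈ F.R

noncomputable def canonicalCF (𝕊 : Set (Set ℕ)) (h : IsExtensionSet 𝕊) : AF where
  A := h.toFinset
  R := {p | p.1 ∈ ArgS 𝕊 ∧ p.2 ∈ ArgS 𝕊 ∧ p ∉ PairsS 𝕊}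
  R_sub := fun p hp => by
    exact ⟨(Set.Finite.mem_toFinset (hs := h)).2 hp.1, (Set.Finite.mem_toFinset (hs := h)).2 hp.2.1⟩
/-!
Attacks never cross components, so conflict-freeness, defense, stability and ranges are all
checked componentwise, and `E ↦ (E ∩ K i)ᵢ` is a bijection between the conflict-free (admissible,
stable) sets of `F` and tuples of such sets of the components. The remaining semantics select the
sets whose range (or the set itself) is not strictly enlarged by another such set; a strict
enlargement of the whole is a weak enlargement in every component and a strict one in some
component, so these maximal sets also correspond to tuples of maximal sets.
-/

open Set Function

namespace AF

theorem sameComp_symm {F : AF} {a b : ℕ} (h : sameComp F a b) : sameComp F b a :=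
  have : Std.Symm (AFStep F) := ⟨fun _ _ => Or.symm⟩
  Relation.ReflTransGen.stdSymm.symm _ _ h

theorem eq_of_mem_comps {F : AF} {K : Set ℕ} (hK : K ∈ comps F) {a : ℕ} (ha : a ∈ K) :
    K = {b ∈ (↑F.A : Set ℕ) | sameComp F a b} := by
  obtain ⟨c, -, rfl⟩ := hK
  ext b
  exact ⟨fun hb => ⟨hb.1, (sameComp_symm ha.2).trans hb.2⟩,
    fun hb => ⟨hb.1, ha.2.trans hb.2⟩⟩

@[simp]
theorem mem_restrictAF_A {F : AF} {K : Set ℕ} {a : ℕ} :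
    a ∈ (restrictAF F K).A ↔ a ∈ F.A ∧ a ∈ K := by
  simp [restrictAF]

theorem coe_restrictAF_A_subset (F : AF) (K : Set ℕ) : ↑(restrictAF F K).A ⊆ K :=
  fun _ ha => (mem_restrictAF_A.mp ha).2

theorem rng_subset (F : AF) {S : Set ℕ} (hS : S ⊆ F.A) : F.rng S ⊆ F.A := by
  rintro x (hx | ⟨s, -, hsx⟩)
  · exact hS hx
  · exact (F.R_sub _ hsx).2

def IsIsolated (F : AF) (K : Set ℕ) : Prop :=
  ∀ ⦃a b : ℕ⦄, (a, b) ∈ F.R → (a ∈ K ↔ b ∈ K)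

theorem isIsolated_of_mem_comps {F : AF} {K : Set ℕ} (hK : K ∈ comps F) : F.IsIsolated K := by
  intro a b hab
  have hstep : sameComp F a b := .single (Or.inl hab)
  constructor
  · intro ha
    rw [eq_of_mem_comps hK ha]
    exact ⟨(F.R_sub _ hab).2, hstep⟩
  · intro hb
    rw [eq_of_mem_comps hK hb]
    exact ⟨(F.R_sub _ hab).1, sameComp_symm hstep⟩

section IsIsolated

variable {F : AF} {K : Set ℕ}

theorem inter_mem_cf_restrictAF {E : Set ℕ} (hE : E ∈ F.cf) :
    E ∩ K ∈ (restrictAF F K).cf :=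
  ⟨fun _ ha => mem_restrictAF_A.mpr ⟨hE.1 ha.1, ha.2⟩,
    fun a ha b hb hab => hE.2 a ha.1 b hb.1 hab.1⟩

theorem IsIsolated.inter_mem_adm_restrictAF (hK : F.IsIsolated K) {E : Set ℕ} (hE : E ∈ F.adm) :
    E ∩ K ∈ (restrictAF F K).adm := by
  refine ⟨inter_mem_cf_restrictAF hE.1, ?_⟩
  rintro a ⟨haE, -⟩ b ⟨hba, hbK, -⟩
  obtain ⟨s, hs, hsb⟩ := hE.2 a haE b hba
  have hsK : s ∈ K := (hK hsb).mpr hbK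
  exact ⟨s, ⟨hs, hsK⟩, hsb, hsK, hbK⟩

theorem IsIsolated.inter_mem_stb_restrictAF (hK : F.IsIsolated K) {E : Set ℕ} (hE : E ∈ F.stb) :
    E ∩ K ∈ (restrictAF F K).stb := by
  refine ⟨inter_mem_cf_restrictAF hE.1, fun a ha haE => ?_⟩
  obtain ⟨haA, haK⟩ := mem_restrictAF_A.mp ha
  obtain ⟨s, hs, hsa⟩ := hE.2 a haA fun h => haE ⟨h, haK⟩
  have hsK : s ∈ K := (hK hsa).mpr haK
  exact ⟨s, ⟨hs, hsK⟩, hsa, hsK, haK⟩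

theorem IsIsolated.rng_inter (hK : F.IsIsolated K) (E : Set ℕ) :
    F.rng E ∩ K = (restrictAF F K).rng (E ∩ K) := by
  ext x
  constructor
  · rintro ⟨hx | ⟨s, hs, hsx⟩, hxK⟩
    · exact .inl ⟨hx, hxK⟩
    · exact .inr ⟨s, ⟨hs, (hK hsx).mpr hxK⟩, hsx, (hK hsx).mpr hxK, hxK⟩
  · rintro (⟨hx, hxK⟩ | ⟨s, ⟨hs, -⟩, hsx, -, hxK⟩)
    · exact ⟨.inl hx, hxK⟩
    · exact ⟨.inr ⟨s, hs, hsx⟩, hxK⟩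

end IsIsolated

structure SplitsAlong {ι : Type*} (F : AF) (K : ι → Set ℕ) : Prop where
  exists_mem : ∀ a ∈ F.A, ∃ i, a ∈ K i
  eq_of_mem : ∀ ⦃i j : ι⦄ ⦃a : ℕ⦄, a ∈ K i → a ∈ K j → i = j
  isIsolated : ∀ i, F.IsIsolated (K i)

theorem splitsAlong_of_range_eq_comps {ι : Type*} {F : AF} {K : ι → Set ℕ} (hinj : Injective K)
    (hrange : range K = comps F) : F.SplitsAlong K where
  exists_mem a ha := by
    obtain ⟨i, hi⟩ : {b ∈ (↑F.A : Set ℕ) | sameComp F a b} ∈ range K := hrange ▸ ⟨a, ha, rfl⟩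
    exact ⟨i, hi ▸ ⟨ha, .refl⟩⟩
  eq_of_mem i j a hi hj := by
    have hK : ∀ k, K k ∈ comps F := fun k => hrange ▸ mem_range_self k
    exact hinj ((eq_of_mem_comps (hK i) hi).trans (eq_of_mem_comps (hK j) hj).symm)
  isIsolated i := isIsolated_of_mem_comps (hrange ▸ mem_range_self i)

def maximalBy (κ : AF → Set ℕ → Set ℕ) (ρ : Semantics) : Semantics :=
  fun G => {S | S ∈ ρ G ∧ ¬ ∃ T ∈ ρ G, κ G S ⊂ κ G T}

theorem maximalBy_id (ρ : Semantics) :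
    maximalBy (fun _ S => S) ρ = fun G => {S | S ∈ ρ G ∧ ∀ T ∈ ρ G, S ⊆ T → S = T} := by
  funext G
  ext S
  simp only [maximalBy, mem_ofPred_eq, not_exists, not_and, ssubset_iff_subset_ne]
  exact and_congr_right fun _ => forall₂_congr fun _ _ => by tauto

theorem naive_eq_maximalBy : naive = maximalBy (fun _ S => S) cf := (maximalBy_id cf).symm

theorem pref_eq_maximalBy : pref = maximalBy (fun _ S => S) adm := (maximalBy_id adm).symm

namespace SplitsAlong

variable {ι : Type*} {F : AF} {K : ι → Set ℕ} (hK : F.SplitsAlong K)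
include hK

theorem iUnion_inter_eq {E : Set ℕ} (hE : E ⊆ F.A) : ⋃ i, E ∩ K i = E := by
  refine subset_antisymm (iUnion_subset fun i => inter_subset_left) fun x hx => ?_
  obtain ⟨i, hi⟩ := hK.exists_mem x (hE hx)
  exact mem_iUnion.mpr ⟨i, hx, hi⟩

theorem iUnion_inter_of_subset {g : ι → Set ℕ} (hg : ∀ i, g i ⊆ K i) (i : ι) :
    (⋃ j, g j) ∩ K i = g i := by
  refine subset_antisymm ?_ fun x hx => ⟨mem_iUnion.mpr ⟨i, hx⟩, hg i hx⟩
  rintro x ⟨hx, hxK⟩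
  obtain ⟨j, hj⟩ := mem_iUnion.mp hx
  exact hK.eq_of_mem (hg j hj) hxK ▸ hj

theorem subset_iff_forall_inter {X Y : Set ℕ} (hX : X ⊆ F.A) :
    X ⊆ Y ↔ ∀ i, X ∩ K i ⊆ Y ∩ K i := by
  refine ⟨fun h i => inter_subset_inter_left _ h, fun h => ?_⟩
  rw [← hK.iUnion_inter_eq hX]
  exact iUnion_subset fun i => (h i).trans inter_subset_left

theorem ssubset_iff_forall_inter {X Y : Set ℕ} (hX : X ⊆ F.A) (hY : Y ⊆ F.A) :
    X ⊂ Y ↔ (∀ i, X ∩ K i ⊆ Y ∩ K i) ∧ ∃ i, X ∩ K i ⊂ Y ∩ K i := by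
  rw [ssubset_def, hK.subset_iff_forall_inter hX, hK.subset_iff_forall_inter hY]
  push Not
  exact and_congr_right fun h => exists_congr fun i => (ssubset_iff_subset_not_subset.trans
    (and_iff_right (h i))).symm

theorem iUnion_mem_cf {g : ι → Set ℕ} (hg : ∀ i, g i ∈ (restrictAF F (K i)).cf) :
    ⋃ i, g i ∈ F.cf := by
  have hgK : ∀ i, g i ⊆ K i := fun i => (hg i).1.trans (coe_restrictAF_A_subset F (K i))
  refine ⟨iUnion_subset fun i x hx => (mem_restrictAF_A.mp ((hg i).1 hx)).1, ?_⟩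
  intro a ha b hb hab
  obtain ⟨i, hi⟩ := mem_iUnion.mp ha
  obtain ⟨j, hj⟩ := mem_iUnion.mp hb
  have hbK : b ∈ K i := (hK.isIsolated i hab).mp (hgK i hi)
  obtain rfl := hK.eq_of_mem hbK (hgK j hj)
  exact (hg i).2 a hi b hj ⟨hab, hgK i hi, hbK⟩

theorem iUnion_mem_adm {g : ι → Set ℕ} (hg : ∀ i, g i ∈ (restrictAF F (K i)).adm) :
    ⋃ i, g i ∈ F.adm := by
  refine ⟨hK.iUnion_mem_cf fun i => (hg i).1, fun a ha b hba => ?_⟩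
  obtain ⟨i, hi⟩ := mem_iUnion.mp ha
  have haK : a ∈ K i := coe_restrictAF_A_subset F (K i) ((hg i).1.1 hi)
  have hbK : b ∈ K i := (hK.isIsolated i hba).mpr haK
  obtain ⟨s, hs, hsb⟩ := (hg i).2 a hi b ⟨hba, hbK, haK⟩
  exact ⟨s, mem_iUnion.mpr ⟨i, hs⟩, hsb.1⟩

theorem iUnion_mem_stb {g : ι → Set ℕ} (hg : ∀ i, g i ∈ (restrictAF F (K i)).stb) :
    ⋃ i, g i ∈ F.stb := by
  refine ⟨hK.iUnion_mem_cf fun i => (hg i).1, fun a ha hna => ?_⟩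
  obtain ⟨i, hi⟩ := hK.exists_mem a ha
  obtain ⟨s, hs, hsa⟩ :=
    (hg i).2 a (mem_restrictAF_A.mpr ⟨ha, hi⟩) fun h => hna (mem_iUnion.mpr ⟨i, h⟩)
  exact ⟨s, mem_iUnion.mpr ⟨i, hs⟩, hsa.1⟩

theorem bijOn_of_inter_mem_of_iUnion_mem {ρ : Semantics} (hA : ∀ G, ∀ E ∈ ρ G, E ⊆ G.A)
    (hinter : ∀ E ∈ ρ F, ∀ i, E ∩ K i ∈ ρ (restrictAF F (K i)))
    (hunion : ∀ g : ι → Set ℕ, (∀ i, g i ∈ ρ (restrictAF F (K i))) → ⋃ i, g i ∈ ρ F) :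
    BijOn (fun E i => E ∩ K i) (ρ F) {g | ∀ i, g i ∈ ρ (restrictAF F (K i))} := by
  refine ⟨hinter, fun E hE T hT h => ?_, fun g hg => ⟨⋃ i, g i, hunion g hg, ?_⟩⟩
  · rw [← hK.iUnion_inter_eq (hA F E hE), ← hK.iUnion_inter_eq (hA F T hT)]
    exact iUnion_congr (congrFun h)
  · exact funext <| hK.iUnion_inter_of_subset fun i =>
      (hA _ _ (hg i)).trans (coe_restrictAF_A_subset F (K i))

theorem bijOn_cf : BijOn (fun E i => E ∩ K i) (F.cf) {g | ∀ i, g i ∈ (restrictAF F (K i)).cf} :=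
  hK.bijOn_of_inter_mem_of_iUnion_mem (fun _ _ hE => hE.1)
    (fun _ hE _ => inter_mem_cf_restrictAF hE) fun _ => hK.iUnion_mem_cf

theorem bijOn_adm :
    BijOn (fun E i => E ∩ K i) (F.adm) {g | ∀ i, g i ∈ (restrictAF F (K i)).adm} :=
  hK.bijOn_of_inter_mem_of_iUnion_mem (fun _ _ hE => hE.1.1)
    (fun _ hE i => (hK.isIsolated i).inter_mem_adm_restrictAF hE) fun _ => hK.iUnion_mem_adm

theorem bijOn_stb :
    BijOn (fun E i => E ∩ K i) (F.stb) {g | ∀ i, g i ∈ (restrictAF F (K i)).stb} :=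
  hK.bijOn_of_inter_mem_of_iUnion_mem (fun _ _ hE => hE.1.1)
    (fun _ hE i => (hK.isIsolated i).inter_mem_stb_restrictAF hE) fun _ => hK.iUnion_mem_stb

theorem bijOn_maximalBy {ρ : Semantics}
    (hρ : BijOn (fun E i => E ∩ K i) (ρ F) {g | ∀ i, g i ∈ ρ (restrictAF F (K i))})
    {κ : AF → Set ℕ → Set ℕ} (hκA : ∀ E ∈ ρ F, κ F E ⊆ F.A)
    (hκ : ∀ E ∈ ρ F, ∀ i, κ F E ∩ K i = κ (restrictAF F (K i)) (E ∩ K i)) :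
    BijOn (fun E i => E ∩ K i) (maximalBy κ ρ F)
      {g | ∀ i, g i ∈ maximalBy κ ρ (restrictAF F (K i))} := by
  have hlt : ∀ E ∈ ρ F, ∀ T ∈ ρ F, κ F E ⊂ κ F T ↔
      (∀ i, κ (restrictAF F (K i)) (E ∩ K i) ⊆ κ (restrictAF F (K i)) (T ∩ K i)) ∧
        ∃ i, κ (restrictAF F (K i)) (E ∩ K i) ⊂ κ (restrictAF F (K i)) (T ∩ K i) := by
    intro E hE T hT
    simp only [hK.ssubset_iff_forall_inter (hκA E hE) (hκA T hT), hκ E hE, hκ T hT]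
  refine ⟨fun E ⟨hE, hEmax⟩ i => ⟨hρ.mapsTo hE i, ?_⟩, hρ.injOn.mono fun _ hE => hE.1,
    fun g hg => ?_⟩
  · classical
    rintro ⟨T', hT', hET'⟩
    have hupd : ∀ j, update (fun j => E ∩ K j) i T' j ∈ ρ (restrictAF F (K j)) :=
      (forall_update_iff _ fun j S => S ∈ ρ (restrictAF F (K j))).mpr
        ⟨hT', fun j _ => hρ.mapsTo hE j⟩
    obtain ⟨T, hT, hTE⟩ := hρ.surjOn hupd
    have hTj : ∀ j, T ∩ K j = update (fun j => E ∩ K j) i T' j := congrFun hTE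
    refine hEmax ⟨T, hT, (hlt E hE T hT).mpr ⟨fun j => ?_, i, by simpa [hTj i] using hET'⟩⟩
    rw [hTj j]
    rcases eq_or_ne j i with rfl | hji
    · simpa using hET'.subset
    · simp [hji]
  · obtain ⟨E, hE, rfl⟩ := hρ.surjOn fun i => (hg i).1
    refine ⟨E, ⟨hE, ?_⟩, rfl⟩
    rintro ⟨T, hT, hET⟩
    obtain ⟨-, i, hi⟩ := (hlt E hE T hT).mp hET
    exact (hg i).2 ⟨T ∩ K i, hρ.mapsTo hT i, hi⟩

end SplitsAlong

end AF

theorem extensions_component_product (σ : Semantics) (hσ : σ ∈ StandardSemantics)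
    (F : AF) (n : ℕ) (K : Fin n → Set ℕ)
    (hinj : Function.Injective K) (hrange : Set.range K = comps F) :
    Set.BijOn (fun (E : Set ℕ) (i : Fin n) => E ∩ K i) (σ F)
      {g : Fin n → Set ℕ | ∀ i, g i ∈ σ (restrictAF F (K i))} := by
  have hK := AF.splitsAlong_of_range_eq_comps hinj hrange
  rcases hσ with rfl | rfl | rfl | rfl | rfl
  · rw [AF.naive_eq_maximalBy]
    exact hK.bijOn_maximalBy hK.bijOn_cf (fun _ hE => hE.1) fun _ _ _ => rfl
  · exact hK.bijOn_stb
  · exact hK.bijOn_maximalBy (κ := AF.rng) hK.bijOn_cf (fun _ hE => F.rng_subset hE.1)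
      fun E _ i => (hK.isIsolated i).rng_inter E
  · rw [AF.pref_eq_maximalBy]
    exact hK.bijOn_maximalBy hK.bijOn_adm (fun _ hE => hE.1.1) fun _ _ _ => rfl
  · exact hK.bijOn_maximalBy (κ := AF.rng) hK.bijOn_adm (fun _ hE => F.rng_subset hE.1.1)
      fun E _ i => (hK.isIsolated i).rng_inter E
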